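/- Let K be a field and W a finite-dimensional K-vector space. Let Q : W × W* → K be the quadratic form Q(u, ξ) = ξ(u) on V = W ⊕ W*, and let ρ : Clifford(Q) → End_K(⋀W) be the algebra homomorphism determined by ρ(u, ξ) = ε_u + ι_ξ, where ε_u is left exterior multiplication by u ∈ W and ι_ξ is the interior product by ξ ∈ W*. Then ρ is bijective, i.e., the Clifford algebra Clifford(Q) is isomorphic as a K-algebra to the endomorphism algebra End_K(⋀W) of the exterior algebra of W. -/

import Mathlib

/-!
The image of `ρ` contains every left multiplication `L_y` (`y ∈ ⋀W`, since the `ε_u` generate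
them) and every contraction `ι_ξ`. Fix a basis `e₁, …, eₙ` of `W` and put `ω = e₁ ∧ ⋯ ∧ eₙ`.
Then `L_ω` is the rank-one operator `x ↦ x₀ • ω`, where `x₀` is the scalar part of `x`;
contracting `ω` by `e₁*, …, eₙ*` gives `1`, so `ω` is a cyclic vector; and the functionals
`x ↦ (ι_{e_S*} x)₀` are dual to the monomials `e_T`, so they span the dual of `⋀W`. A subalgebra
of `End V` containing a rank-one operator `x ↦ φ(x) • v` with `v` cyclic and `φ` cocyclic contains
every rank-one operator, hence is everything. Finally `Clifford(Q)` and `End(⋀W)` both have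
dimension `4ⁿ`, so the surjection `ρ` is a bijection.
-/

open Module

theorem Module.Basis.coord_apply_self {R M I : Type*} [CommRing R] [AddCommGroup M] [Module R M]
    (b : Basis I R M) (i : I) : b.coord i (b i) = 1 := by
  simp

theorem Module.Basis.coord_apply_of_ne {R M I : Type*} [CommRing R] [AddCommGroup M] [Module R M]
    (b : Basis I R M) {i j : I} (h : j ≠ i) : b.coord i (b j) = 0 := by
  simp [h]

namespace ExteriorAlgebra

section Monomials

variable {R M I : Type*} [CommRing R] [AddCommGroup M] [Module R M] (b : Basis I R M)

@[simp] theorem algebraMapInv_ι (v : M) : algebraMapInv (ι R v) = 0 := by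
  simp [algebraMapInv]

noncomputable def wedgeList (l : List I) : ExteriorAlgebra R M :=
  (l.map fun i => ι R (b i)).prod

@[simp] theorem wedgeList_nil : wedgeList b [] = 1 := rfl

@[simp] theorem wedgeList_cons (i : I) (l : List I) :
    wedgeList b (i :: l) = ι R (b i) * wedgeList b l := by
  simp [wedgeList]

theorem wedgeList_append (l₁ l₂ : List I) :
    wedgeList b (l₁ ++ l₂) = wedgeList b l₁ * wedgeList b l₂ := by
  simp [wedgeList]

theorem wedgeList_eq_ιMulti (l : List I) :
    wedgeList b l = ιMulti R l.length fun j => b l[j] := by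
  rw [ιMulti_apply, wedgeList]
  exact congrArg List.prod (List.ofFn_getElem_eq_map l _).symm

theorem wedgeList_eq_zero_of_not_nodup {l : List I} (hl : ¬l.Nodup) : wedgeList b l = 0 := by
  rw [wedgeList_eq_ιMulti]
  exact ιMulti_eq_zero_of_not_inj fun h => hl (List.nodup_iff_injective_get.2 h.of_comp)

theorem wedgeList_mul_ι_eq_zero {l : List I} (hl : ∀ i, i ∈ l) (v : M) :
    wedgeList b l * ι R v = 0 := by
  have : LinearMap.mulLeft R (wedgeList b l) ∘ₗ ι R = 0 := b.ext fun i => by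
    have hdup : ¬(l ++ [i]).Nodup := fun h =>
      List.disjoint_of_nodup_append h (hl i) (List.mem_singleton_self i)
    simpa [wedgeList_append] using wedgeList_eq_zero_of_not_nodup b hdup
  exact LinearMap.congr_fun this v

theorem wedgeList_mul_eq_algebraMapInv_smul {l : List I} (hl : ∀ i, i ∈ l)
    (x : ExteriorAlgebra R M) : wedgeList b l * x = algebraMapInv x • wedgeList b l := by
  induction x using ExteriorAlgebra.induction with
  | algebraMap r => simp [Algebra.commutes, Algebra.smul_def]
  | ι v => simp [wedgeList_mul_ι_eq_zero b hl]
  | mul x y hx hy => rw [← mul_assoc, hx, smul_mul_assoc, hy, smul_smul, map_mul, mul_comm]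
  | add x y hx hy => rw [mul_add, hx, hy, map_add, add_smul]

theorem contractLeft_wedgeList_eq_zero (d : Dual R M) {l : List I}
    (h : ∀ j ∈ l, d (b j) = 0) : CliffordAlgebra.contractLeft (Q := 0) d (wedgeList b l) = 0 := by
  induction l with
  | nil => exact CliffordAlgebra.contractLeft_one _ d
  | cons i l ih =>
    rw [wedgeList_cons, CliffordAlgebra.contractLeft_ι_mul, h i (by simp),
      ih fun j hj => h j (by simp [hj]), zero_smul, mul_zero, sub_zero]

/-- Contraction by the coordinate functionals `b.coord i`, `i ∈ l`; the head of `l` acts first. -/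
noncomputable def contractList : List I → Module.End R (ExteriorAlgebra R M)
  | [] => 1
  | i :: l => contractList l * CliffordAlgebra.contractLeft (Q := 0) (b.coord i)

theorem contractList_cons (i : I) (l : List I) :
    contractList b (i :: l) = contractList b l * CliffordAlgebra.contractLeft (Q := 0) (b.coord i) :=
  rfl

theorem contractList_wedgeList_self {l : List I} (hl : l.Nodup) :
    contractList b l (wedgeList b l) = 1 := by
  induction l with
  | nil => rfl
  | cons i l ih =>
    rw [List.nodup_cons] at hl
    have hi : CliffordAlgebra.contractLeft (Q := 0) (b.coord i) (wedgeList b l) = 0 :=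
      contractLeft_wedgeList_eq_zero b _ fun j hj => b.coord_apply_of_ne fun hji => hl.1 (hji ▸ hj)
    rw [contractList_cons, Module.End.mul_apply, wedgeList_cons, CliffordAlgebra.contractLeft_ι_mul,
      hi, mul_zero, sub_zero, b.coord_apply_self, one_smul, ih hl.2]

theorem algebraMapInv_contractList_ι_mul {s : List I} {v : M} (hv : ∀ i ∈ s, b.coord i v = 0)
    (y : ExteriorAlgebra R M) : algebraMapInv (contractList b s (ι R v * y)) = 0 := by
  induction s generalizing y with
  | nil => simp [contractList]
  | cons k s ih =>
    rw [contractList_cons, Module.End.mul_apply, CliffordAlgebra.contractLeft_ι_mul,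
      hv k (by simp), zero_smul, zero_sub, map_neg, map_neg,
      ih (fun i hi => hv i (by simp [hi])), neg_zero]

theorem algebraMapInv_contractList_wedgeList [LinearOrder I] {s t : List I}
    (hs : s.Pairwise (· < ·)) (ht : t.Pairwise (· < ·)) :
    algebraMapInv (contractList b s (wedgeList b t)) = if s = t then 1 else 0 := by
  induction t generalizing s with
  | nil =>
    cases s with
    | nil => simp [contractList]
    | cons i s => simp [contractList_cons, CliffordAlgebra.contractLeft_one]
  | cons j t ih =>
    cases s with
    | nil => simp [contractList]
    | cons i s =>
      rw [List.pairwise_cons] at hs ht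
      rw [contractList_cons, Module.End.mul_apply, wedgeList_cons,
        CliffordAlgebra.contractLeft_ι_mul]
      rcases lt_trichotomy i j with hij | rfl | hji
      · rw [b.coord_apply_of_ne hij.ne', contractLeft_wedgeList_eq_zero b _ fun k hk =>
          b.coord_apply_of_ne (hij.trans (ht.1 k hk)).ne']
        simp [hij.ne]
      · rw [contractLeft_wedgeList_eq_zero b _ fun k hk => b.coord_apply_of_ne (ht.1 k hk).ne',
          mul_zero, sub_zero, b.coord_apply_self, one_smul, ih hs.2 ht.2]
        simp
      -- `e_j` has no component along the remaining indices of `s`, all of which exceed `j`.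
      · rw [b.coord_apply_of_ne hji.ne, zero_smul, zero_sub, map_neg, map_neg,
          algebraMapInv_contractList_ι_mul b fun k hk =>
            b.coord_apply_of_ne (hji.trans (hs.1 k hk)).ne]
        simp [hji.ne']

theorem algebraMapInv_contractList_sort_wedgeList_sort [LinearOrder I] (S T : Finset I) :
    algebraMapInv (contractList b S.sort (wedgeList b T.sort)) = if S = T then 1 else 0 := by
  rw [algebraMapInv_contractList_wedgeList b (Finset.sortedLT_sort S).pairwise
    (Finset.sortedLT_sort T).pairwise]
  congr 1
  exact propext ⟨fun h => by classical rw [← Finset.sort_toFinset S (· ≤ ·), h,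
    Finset.sort_toFinset], fun h => h ▸ rfl⟩

end Monomials

section Dimension

variable {R M : Type*} [CommRing R] [Nontrivial R] [AddCommGroup M] [Module R M]
  [Module.Free R M] [Module.Finite R M]

instance instModuleFinite : Module.Finite R (ExteriorAlgebra R M) :=
  .of_basis (finBasis R M).ExteriorAlgebra

theorem finrank_eq_two_pow : finrank R (ExteriorAlgebra R M) = 2 ^ finrank R M := by
  rw [finrank_eq_card_basis (finBasis R M).ExteriorAlgebra, Fintype.card_finset, Fintype.card_fin]

end Dimension

end ExteriorAlgebra

namespace CliffordAlgebra

variable {R M : Type*} [CommRing R] [AddCommGroup M] [Module R M] [Module.Free R M]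

/-- Over a free module every quadratic form is `B.toQuadraticMap` for some bilinear `B`, so
`changeForm` applies in every characteristic. -/
noncomputable def equivExteriorAlgebraOfFree (Q : QuadraticForm R M) :
    CliffordAlgebra Q ≃ₗ[R] ExteriorAlgebra R M :=
  changeFormEquiv (Q' := 0) (LinearMap.BilinMap.toQuadraticMap_surjective (0 - Q)).choose_spec

variable [Nontrivial R] [Module.Finite R M]

theorem finrank_eq_two_pow (Q : QuadraticForm R M) :
    finrank R (CliffordAlgebra Q) = 2 ^ finrank R M := by
  rw [(equivExteriorAlgebraOfFree Q).finrank_eq, ExteriorAlgebra.finrank_eq_two_pow]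

instance instModuleFinite (Q : QuadraticForm R M) : Module.Finite R (CliffordAlgebra Q) :=
  .equiv (equivExteriorAlgebraOfFree Q).symm

end CliffordAlgebra

theorem Subalgebra.eq_top_of_smulRight_mem {R V : Type*} [CommRing R] [AddCommGroup V]
    [Module R V] [Module.Free R V] [Module.Finite R V] {A : Subalgebra R (Module.End R V)}
    {φ : Dual R V} {v : V} (hφv : φ.smulRight v ∈ A) (hv : ∀ y, ∃ a ∈ A, a v = y)
    (hφ : ∀ f : Dual R V, ∃ a ∈ A, φ ∘ₗ a = f) : A = ⊤ := by
  have hrankOne (f : Dual R V) (y : V) : f.smulRight y ∈ A := by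
    obtain ⟨a, ha, rfl⟩ := hv y
    obtain ⟨c, hc, rfl⟩ := hφ f
    convert mul_mem (mul_mem ha hφv) hc using 1
    ext x
    simp
  let B := Free.chooseBasis R V
  refine eq_top_iff.2 fun T _ => ?_
  have hT : T = ∑ i, (B.coord i).smulRight (T (B i)) := B.ext fun j => by
    simp [Basis.coord_apply, Finsupp.single_apply]
  rw [hT]
  exact sum_mem fun i _ => hrankOne _ _

namespace ExteriorAlgebra

theorem mulLeft_mem_of_forall_ι {R M : Type*} [CommRing R] [AddCommGroup M] [Module R M]
    {A : Subalgebra R (Module.End R (ExteriorAlgebra R M))}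
    (hε : ∀ u, LinearMap.mulLeft R (ι R u) ∈ A) (y : ExteriorAlgebra R M) :
    LinearMap.mulLeft R y ∈ A := by
  change Algebra.lmul R _ y ∈ A
  induction y using ExteriorAlgebra.induction with
  | algebraMap r => rw [AlgHom.commutes]; exact A.algebraMap_mem r
  | ι u => exact hε u
  | mul x y hx hy => rw [map_mul]; exact mul_mem hx hy
  | add x y hx hy => rw [map_add]; exact add_mem hx hy

theorem contractList_mem {R M I : Type*} [CommRing R] [AddCommGroup M] [Module R M]
    (b : Basis I R M) {A : Subalgebra R (Module.End R (ExteriorAlgebra R M))}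
    (hι : ∀ d, CliffordAlgebra.contractLeft (Q := 0) d ∈ A) (l : List I) :
    contractList b l ∈ A := by
  induction l with
  | nil => exact one_mem A
  | cons i l ih => exact mul_mem ih (hι _)

theorem span_range_algebraMapInv_comp_contractList {K M I : Type*} [Field K] [AddCommGroup M]
    [Module K M] [Fintype I] [LinearOrder I] (b : Basis I K M) :
    Submodule.span K (Set.range fun S : Finset I =>
      (algebraMapInv : ExteriorAlgebra K M →ₐ[K] K).toLinearMap ∘ₗ contractList b S.sort) = ⊤ := by
  have hli : LinearIndependent K fun S : Finset I =>
      (algebraMapInv : ExteriorAlgebra K M →ₐ[K] K).toLinearMap ∘ₗ contractList b S.sort := by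
    rw [Fintype.linearIndependent_iff]
    intro c hc T
    have hT := LinearMap.congr_fun hc (wedgeList b T.sort)
    simp only [LinearMap.sum_apply, LinearMap.smul_apply, LinearMap.comp_apply,
      AlgHom.toLinearMap_apply] at hT
    simpa [algebraMapInv_contractList_sort_wedgeList_sort] using hT
  have : Module.Finite K M := .of_basis b
  refine hli.span_eq_top_of_card_eq_finrank' ?_
  rw [Subspace.dual_finrank_eq, finrank_eq_two_pow, finrank_eq_card_basis b, Fintype.card_finset]

theorem subalgebra_eq_top_of_mulLeft_mem_of_contractLeft_mem {K M : Type*} [Field K]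
    [AddCommGroup M] [Module K M] [FiniteDimensional K M]
    {A : Subalgebra K (Module.End K (ExteriorAlgebra K M))}
    (hε : ∀ u, LinearMap.mulLeft K (ι K u) ∈ A)
    (hι : ∀ d, CliffordAlgebra.contractLeft (Q := 0) d ∈ A) : A = ⊤ := by
  let b := finBasis K M
  let l := List.finRange (finrank K M)
  let φ := (algebraMapInv : ExteriorAlgebra K M →ₐ[K] K).toLinearMap
  have hrankOne : φ.smulRight (wedgeList b l) ∈ A := by
    convert mulLeft_mem_of_forall_ι hε (wedgeList b l) using 1
    exact LinearMap.ext fun x => (wedgeList_mul_eq_algebraMapInv_smul b List.mem_finRange x).symm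
  have hcyclic (y : ExteriorAlgebra K M) : ∃ a ∈ A, a (wedgeList b l) = y :=
    ⟨_, mul_mem (mulLeft_mem_of_forall_ι hε y) (contractList_mem b hι l),
      by simp [contractList_wedgeList_self b (List.nodup_finRange _), l]⟩
  have hcocyclic (f : Dual K (ExteriorAlgebra K M)) : ∃ a ∈ A, φ ∘ₗ a = f := by
    have : f ∈ A.toSubmodule.map (LinearMap.compRight K φ) := by
      refine (span_range_algebraMapInv_comp_contractList b).ge.trans ?_ Submodule.mem_top
      exact Submodule.span_le.2 <| Set.range_subset_iff.2 fun S =>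
        ⟨_, contractList_mem b hι _, rfl⟩
    obtain ⟨a, ha, rfl⟩ := this
    exact ⟨a, ha, rfl⟩
  exact Subalgebra.eq_top_of_smulRight_mem hrankOne hcyclic hcocyclic

end ExteriorAlgebra

/-- The quadratic form `Q(u, ξ) = ξ(u)` on `W ⊕ W*`. -/
noncomputable def pairingQ (K W : Type*) [Field K] [AddCommGroup W] [Module K W] :
    QuadraticForm K (W × Module.Dual K W) :=
  LinearMap.BilinMap.toQuadraticMap
    (LinearMap.mk₂ K (fun (x y : W × Module.Dual K W) => x.2 y.1)
      (fun x x' y => by simp)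
      (fun a x y => by simp)
      (fun x y y' => by simp)
      (fun a x y => by simp))

/-- For a finite-dimensional vector space `W`, the algebra homomorphism
`ρ : Clifford(Q) → End(⋀ W)` determined by `ρ(u, ξ) = ε_u + ι_ξ` (exterior multiplication plus
contraction) is bijective, i.e. `Clifford(Q) ≅ End(⋀ W)` as `K`-algebras. -/
theorem stmt_1 (K W : Type*) [Field K] [AddCommGroup W] [Module K W] [FiniteDimensional K W]
    (ρ : CliffordAlgebra (pairingQ K W) →ₐ[K] Module.End K (ExteriorAlgebra K W))
    (hρ : ∀ (u : W) (ξ : Module.Dual K W),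
      ρ (CliffordAlgebra.ι (pairingQ K W) (u, ξ))
        = LinearMap.mulLeft K (ExteriorAlgebra.ι K u)
          + CliffordAlgebra.contractLeft (Q := (0 : QuadraticForm K W)) ξ) :
    Function.Bijective ρ := by
  have hsurj : Function.Surjective ρ := by
    refine (AlgHom.range_eq_top ρ).1 <|
      ExteriorAlgebra.subalgebra_eq_top_of_mulLeft_mem_of_contractLeft_mem (fun u => ?_) fun ξ => ?_
    · exact ⟨CliffordAlgebra.ι _ (u, 0), by simp [hρ]⟩
    · exact ⟨CliffordAlgebra.ι _ (0, ξ), by simp [hρ]⟩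
  have hrank : finrank K (CliffordAlgebra (pairingQ K W))
      = finrank K (Module.End K (ExteriorAlgebra K W)) := by
    rw [CliffordAlgebra.finrank_eq_two_pow, finrank_linearMap, ExteriorAlgebra.finrank_eq_two_pow,
      finrank_prod, Subspace.dual_finrank_eq, pow_add]
  exact ⟨(LinearMap.injective_iff_surjective_of_finrank_eq_finrank (f := ρ.toLinearMap) hrank).2
    hsurj, hsurj⟩
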